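/- For any compact infinite metric space (A, ρ) and N ≥ 2: there exists an N-point best-packing configuration ω_N with η(ω_N, A) ≥ δ(ω_N) if and only if δ_N(A) = δ_{N+1}(A). -/

import Mathlib

open scoped BigOperators
open Filter Metric

/-- Separation distance of an `N`-point configuration. -/
noncomputable def sep {E : Type*} [MetricSpace E] {N : ℕ} (x : Fin N → E) : ℝ :=
  ⨅ p : {p : Fin N × Fin N // p.1 ≠ p.2}, dist (x p.1.1) (x p.1.2)

/-- Mesh norm (covering radius) of a configuration relative to a set `S`. -/
noncomputable def mesh {E : Type*} [MetricSpace E] {N : ℕ} (S : Set E) (x : Fin N → E) : ℝ :=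
  ⨆ y : S, ⨅ i, dist (y : E) (x i)

/-- `N`-point best-packing distance of the set `S`. -/
noncomputable def packDist {E : Type*} [MetricSpace E] (S : Set E) (N : ℕ) : ℝ :=
  ⨆ x : {x : Fin N → E // Function.Injective x ∧ ∀ i, x i ∈ S}, sep x.1

/-- Riesz `s`-energy of a configuration. -/
noncomputable def energy {E : Type*} [MetricSpace E] {N : ℕ} (s : ℝ) (x : Fin N → E) : ℝ :=
  ∑ i, ∑ j ∈ Finset.univ.filter (· ≠ i), dist (x i) (x j) ^ (-s)

/-- Minimal `N`-point Riesz `s`-energy of the set `S`. -/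
noncomputable def minEnergy {E : Type*} [MetricSpace E] (S : Set E) (N : ℕ) (s : ℝ) : ℝ :=
  ⨅ x : {x : Fin N → E // Function.Injective x ∧ ∀ i, x i ∈ S}, energy s x.1

/-!
Adding to a configuration a point at distance at least `δ` from all of its points keeps the
separation at least `δ`. So a best `N`-packing whose mesh norm (attained, by compactness) is at
least its separation `δ_N` extends to `N + 1` points with separation `δ_N`, whence
`δ_N ≤ δ_{N+1} ≤ δ_N`. Conversely, if `δ_N = δ_{N+1}`, dropping a point `y` from a best
`(N + 1)`-packing leaves a best `N`-packing, and `y` is at distance at least `δ_N` from each of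
its points, which bounds its mesh norm from below.
-/

section Separation

variable {E : Type*} [MetricSpace E] {N : ℕ}

lemma nonempty_offDiag_of_two_le (hN : 2 ≤ N) : Nonempty {p : Fin N × Fin N // p.1 ≠ p.2} :=
  ⟨⟨(⟨0, by omega⟩, ⟨1, by omega⟩), by simp [Fin.ext_iff]⟩⟩

lemma sep_eq_inf' [Nonempty {p : Fin N × Fin N // p.1 ≠ p.2}] (x : Fin N → E) :
    sep x = Finset.univ.inf' Finset.univ_nonempty
      (fun p : {p : Fin N × Fin N // p.1 ≠ p.2} => dist (x p.1.1) (x p.1.2)) :=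
  (Finset.inf'_univ_eq_ciInf _).symm

lemma sep_le_dist (x : Fin N → E) {i j : Fin N} (h : i ≠ j) : sep x ≤ dist (x i) (x j) := by
  have : Nonempty {p : Fin N × Fin N // p.1 ≠ p.2} := ⟨⟨(i, j), h⟩⟩
  rw [sep_eq_inf']
  exact Finset.inf'_le _ (Finset.mem_univ (⟨(i, j), h⟩ : {p : Fin N × Fin N // p.1 ≠ p.2}))

lemma le_sep (hN : 2 ≤ N) {x : Fin N → E} {c : ℝ}
    (h : ∀ i j, i ≠ j → c ≤ dist (x i) (x j)) : c ≤ sep x := by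
  have := nonempty_offDiag_of_two_le hN
  rw [sep_eq_inf', Finset.le_inf'_iff]
  exact fun p _ => h _ _ p.2

lemma sep_pos (hN : 2 ≤ N) {x : Fin N → E} (hx : Function.Injective x) : 0 < sep x := by
  have := nonempty_offDiag_of_two_le hN
  rw [sep_eq_inf', Finset.lt_inf'_iff]
  exact fun p _ => dist_pos.2 fun h => p.2 (hx h)

lemma injective_of_sep_pos {x : Fin N → E} (h : 0 < sep x) : Function.Injective x := by
  intro i j hij
  by_contra hne
  have := sep_le_dist x hne
  rw [hij, dist_self] at this
  linarith

lemma continuous_sep (hN : 2 ≤ N) : Continuous (sep : (Fin N → E) → ℝ) := by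
  have := nonempty_offDiag_of_two_le hN
  simp_rw [funext sep_eq_inf']
  exact Continuous.finset_inf'_apply _ fun p _ => (continuous_apply _).dist (continuous_apply _)

lemma sep_le_sep_comp {M : ℕ} (hM : 2 ≤ M) (x : Fin N → E) {f : Fin M → Fin N}
    (hf : Function.Injective f) : sep x ≤ sep (x ∘ f) :=
  le_sep hM fun _ _ hij => sep_le_dist x (hf.ne hij)

lemma le_sep_snoc (hN : 1 ≤ N) {x : Fin N → E} {y : E} {c : ℝ} (hx : c ≤ sep x)
    (hy : ∀ i, c ≤ dist y (x i)) : c ≤ sep (Fin.snoc x y : Fin (N + 1) → E) := by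
  refine le_sep (by omega) fun i j hij => ?_
  rcases Fin.eq_castSucc_or_eq_last i with ⟨i, rfl⟩ | rfl <;>
    rcases Fin.eq_castSucc_or_eq_last j with ⟨j, rfl⟩ | rfl
  · simpa using hx.trans (sep_le_dist x (ne_of_apply_ne Fin.castSucc hij))
  · simpa [dist_comm] using hy i
  · simpa using hy j
  · exact absurd rfl hij

end Separation

section Mesh

variable {E : Type*} [MetricSpace E] {N : ℕ} [Nonempty (Fin N)]

lemma iInf_dist_le_mesh {S : Set E} (hS : Bornology.IsBounded S) (x : Fin N → E) {y : E}
    (hy : y ∈ S) : ⨅ i, dist y (x i) ≤ mesh S x := by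
  obtain ⟨r, hr⟩ := hS.subset_closedBall (x (Classical.arbitrary _))
  refine le_ciSup (f := fun w : S => ⨅ i, dist (w : E) (x i)) ⟨r, ?_⟩ ⟨y, hy⟩
  rintro _ ⟨w, rfl⟩
  exact (ciInf_le (Set.finite_range _).bddBelow _).trans (mem_closedBall.1 (hr w.2))

lemma IsCompact.exists_mesh_le_iInf_dist {S : Set E} (hS : IsCompact S) (hne : S.Nonempty)
    (x : Fin N → E) : ∃ y ∈ S, mesh S x ≤ ⨅ i, dist y (x i) := by
  have hcont : Continuous fun y : E => ⨅ i, dist y (x i) := by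
    simp_rw [← Finset.inf'_univ_eq_ciInf]
    exact Continuous.finset_inf'_apply _ fun i _ => continuous_id.dist continuous_const
  obtain ⟨y, hyS, hmax⟩ := hS.exists_isMaxOn hne hcont.continuousOn
  have : Nonempty S := hne.to_subtype
  exact ⟨y, hyS, ciSup_le fun w => hmax w.2⟩

lemma sep_le_mesh_init {S : Set E} (hS : Bornology.IsBounded S) (z : Fin (N + 1) → E)
    (hz : ∀ i, z i ∈ S) : sep z ≤ mesh S (Fin.init z) :=
  (le_ciInf fun i => sep_le_dist z (Fin.castSucc_lt_last i).ne').trans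
    (iInf_dist_le_mesh hS _ (hz (Fin.last N)))

end Mesh

section Packing

variable {A : Type*} [MetricSpace A] {N : ℕ}

lemma packDist_le_of_forall_sep_le [Infinite A] {c : ℝ}
    (h : ∀ x : Fin N → A, Function.Injective x → sep x ≤ c) :
    packDist (Set.univ : Set A) N ≤ c := by
  have : Nonempty {x : Fin N → A // Function.Injective x ∧ ∀ i, x i ∈ Set.univ} :=
    ⟨⟨_, (Infinite.natEmbedding A).injective.comp Fin.val_injective, fun _ => trivial⟩⟩
  exact ciSup_le fun z => h z.1 z.2.1

variable [CompactSpace A]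

lemma sep_le_packDist (hN : 2 ≤ N) {x : Fin N → A} (hx : Function.Injective x) :
    sep x ≤ packDist (Set.univ : Set A) N := by
  obtain ⟨p⟩ := nonempty_offDiag_of_two_le hN
  have hdiam : ∀ y : Fin N → A, sep y ≤ diam (Set.univ : Set A) := fun y =>
    (sep_le_dist y p.2).trans (dist_le_diam_of_mem isCompact_univ.isBounded trivial trivial)
  exact le_ciSup (f := fun z : {y : Fin N → A // _} => sep z.1)
    ⟨_, Set.forall_mem_range.2 fun z => hdiam z.1⟩ ⟨x, hx, fun _ => trivial⟩

lemma sep_le_packDist_succ_of_sep_le_mesh (hN : 2 ≤ N) {x : Fin N → A}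
    (hx : Function.Injective x) (h : sep x ≤ mesh Set.univ x) :
    sep x ≤ packDist (Set.univ : Set A) (N + 1) := by
  have : Nonempty (Fin N) := ⟨⟨0, by omega⟩⟩
  obtain ⟨y, -, hy⟩ := isCompact_univ.exists_mesh_le_iInf_dist
    ⟨x (Classical.arbitrary _), trivial⟩ x
  have hfar : ∀ i, sep x ≤ dist y (x i) :=
    fun i => (h.trans hy).trans (ciInf_le (Set.finite_range _).bddBelow i)
  have hsnoc := le_sep_snoc (by omega) le_rfl hfar
  exact hsnoc.trans (sep_le_packDist (by omega)
    (injective_of_sep_pos ((sep_pos hN hx).trans_le hsnoc)))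

variable [Infinite A]

lemma exists_sep_eq_packDist (hN : 2 ≤ N) :
    ∃ x : Fin N → A, Function.Injective x ∧ sep x = packDist (Set.univ : Set A) N := by
  obtain ⟨x, -, hmax⟩ := isCompact_univ.exists_isMaxOn Set.univ_nonempty
    (continuous_sep (E := A) hN).continuousOn
  have hinj : Function.Injective x := injective_of_sep_pos <|
    (sep_pos hN ((Infinite.natEmbedding A).injective.comp Fin.val_injective)).trans_le
      (hmax (Set.mem_univ _))
  exact ⟨x, hinj, le_antisymm (sep_le_packDist hN hinj)
    (packDist_le_of_forall_sep_le fun y _ => hmax (Set.mem_univ y))⟩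

lemma packDist_succ_le (hN : 2 ≤ N) :
    packDist (Set.univ : Set A) (N + 1) ≤ packDist (Set.univ : Set A) N :=
  packDist_le_of_forall_sep_le fun z hz =>
    (sep_le_sep_comp hN z (Fin.castSucc_injective N)).trans
      (sep_le_packDist hN (hz.comp (Fin.castSucc_injective N)))

end Packing

theorem stmt_19 {A : Type*} [MetricSpace A] [CompactSpace A] [Infinite A]
    (N : ℕ) (hN : 2 ≤ N) :
    (∃ x : Fin N → A, Function.Injective x ∧ sep x = packDist (Set.univ : Set A) N ∧
        sep x ≤ mesh (Set.univ : Set A) x) ↔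
      packDist (Set.univ : Set A) N = packDist (Set.univ : Set A) (N + 1) := by
  have : Nonempty (Fin N) := ⟨⟨0, by omega⟩⟩
  constructor
  · rintro ⟨x, hx, hbest, hmesh⟩
    refine le_antisymm ?_ (packDist_succ_le hN)
    exact hbest ▸ sep_le_packDist_succ_of_sep_le_mesh hN hx hmesh
  · intro h
    obtain ⟨z, hz, hzbest⟩ := exists_sep_eq_packDist (A := A) (N := N + 1) (by omega)
    have hinit : sep z ≤ sep (Fin.init z) := sep_le_sep_comp hN z (Fin.castSucc_injective N)
    have hinj : Function.Injective (Fin.init z) := hz.comp (Fin.castSucc_injective N)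
    have hbest : sep (Fin.init z) = packDist Set.univ N :=
      le_antisymm (sep_le_packDist hN hinj) (by rwa [h, ← hzbest])
    refine ⟨Fin.init z, hinj, hbest, ?_⟩
    calc sep (Fin.init z) = sep z := by rw [hbest, h, hzbest]
      _ ≤ mesh Set.univ (Fin.init z) :=
        sep_le_mesh_init isCompact_univ.isBounded z fun _ => trivial
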